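/- arXiv:1701.03705 — 6 statements merged into one kernel-verified Lean document; each statement's English description precedes it below -/
import Mathlib

section
/- Let C1, C2, C3 be polynomials in Q[x1, x2] (two commuting variables over the rationals) with x1^2 * C1 + x1 * x2 * C2 + x2^2 * C3 = 0. Then there exist polynomials D1, D3 in Q[x1, x2] with C1 = x2 * D1, C3 = x1 * D3, and C2 = -x1 * D1 - x2 * D3. -/
theorem Prime.dvd_of_dvd_pow_mul {M : Type*} [CommMonoidWithZero M] {p q a : M} (hp : Prime p)
    (hpq : ¬p ∣ q) {n : ℕ} (h : p ∣ q ^ n * a) : p ∣ a :=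
  (hp.dvd_or_dvd h).resolve_left fun hpow => hpq (hp.dvd_of_dvd_pow hpow)

theorem exists_eq_of_sq_mul_add_mul_mul_add_sq_mul_eq_zero {R : Type*} [CommRing R] [IsDomain R]
    {x y : R} (hx : Prime x) (hy : Prime y) (hxy : ¬x ∣ y) (hyx : ¬y ∣ x) {c₁ c₂ c₃ : R}
    (h : x ^ 2 * c₁ + x * y * c₂ + y ^ 2 * c₃ = 0) :
    ∃ d₁ d₃ : R, c₁ = y * d₁ ∧ c₃ = x * d₃ ∧ c₂ = -x * d₁ - y * d₃ := by
  obtain ⟨d₁, rfl⟩ : y ∣ c₁ :=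
    hy.dvd_of_dvd_pow_mul (n := 2) hyx ⟨-(x * c₂ + y * c₃), by linear_combination h⟩
  obtain ⟨d₃, rfl⟩ : x ∣ c₃ :=
    hx.dvd_of_dvd_pow_mul (n := 2) hxy ⟨-(x * y * d₁ + y * c₂), by linear_combination h⟩
  refine ⟨d₁, d₃, rfl, rfl, mul_left_cancel₀ (mul_ne_zero hx.ne_zero hy.ne_zero) ?_⟩
  linear_combination h

open MvPolynomial in
theorem stmt_6 (C1 C2 C3 : MvPolynomial (Fin 2) ℚ)
    (h : (X 0)^2 * C1 + X 0 * X 1 * C2 + (X 1)^2 * C3 = 0) :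
    ∃ D1 D3 : MvPolynomial (Fin 2) ℚ,
      C1 = X 1 * D1 ∧ C3 = X 0 * D3 ∧ C2 = -(X 0) * D1 - X 1 * D3 :=
  exists_eq_of_sq_mul_add_mul_mul_add_sq_mul_eq_zero X_prime X_prime
    (by rw [X_dvd_X]; decide) (by rw [X_dvd_X]; decide) h
end

section
/- For every integer n ≥ 1, there is no pair of positive integers (α, β) such that 180n^2 + 218n + 66 = α*(30n + 18) + β*(36n + 22). -/
theorem stmt_7 (n : ℤ) (hn : 1 ≤ n) :
    ¬ ∃ α β : ℤ, 0 < α ∧ 0 < β ∧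
      180*n^2 + 218*n + 66 = α * (30*n + 18) + β * (36*n + 22) := by
  rintro ⟨α, β, hα, hβ, heq⟩
  set t : ℤ := 5*α + 6*β with ht
  have h1 : α = (18*n + 11)*t - 6*(90*n^2 + 109*n + 33) := by
    linear_combination 3*heq + (18*n + 11)*ht
  have h2 : 2*β = 10*(90*n^2 + 109*n + 33) - (30*n + 18)*t := by
    linear_combination -5*heq - (30*n + 18)*ht
  have hb : (0:ℤ) < 18*n + 11 := by linarith
  have htge : 30*n + 19 ≤ t := by nlinarith [hα, h1]
  nlinarith [hβ, h2, htge, hn,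
    mul_le_mul_of_nonneg_left htge (by linarith : (0:ℤ) ≤ 30*n+18)]
end

section
/- For every integer n ≥ 1, there is no pair of non-negative integers (α, β) such that (540n^2 + 654n + 197) - ((126n+75) + (132n+79) + (138n+83)) = α*(30n + 18) + β*(36n + 22). -/
theorem stmt_9 (n : ℤ) (hn : 1 ≤ n) :
    ¬ ∃ α β : ℤ, 0 ≤ α ∧ 0 ≤ β ∧
      (540*n^2 + 654*n + 197) - ((126*n + 75) + (132*n + 79) + (138*n + 83)) =
        α * (30*n + 18) + β * (36*n + 22) := by
  rintro ⟨α, β, hα, hβ, heq⟩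
  set t : ℤ := 90*n - 5*α - 6*β - 11 with ht
  have h2 : 2*(β+1) = 2*(t*(15*n+9)) := by linear_combination (-5 : ℤ) * heq
  have h1 : β + 1 = t*(15*n+9) := by linarith
  have htpos : 1 ≤ t := by nlinarith
  have hbge : 15*n + 8 ≤ β := by nlinarith
  nlinarith [mul_nonneg hα (by linarith : (0:ℤ) ≤ 30*n+18),
    mul_le_mul_of_nonneg_right hbge (by linarith : (0:ℤ) ≤ 36*n+22)]
end

section
/- For every integer n ≥ 1, there is no pair of non-negative integers (α, β) such that (540n^2 + 654n + 197) - (396n + 237) - (180n^2 + 218n + 66) = α*(30n + 18) + β*(36n + 22). -/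
theorem stmt_10 (n : ℤ) (hn : 1 ≤ n) :
    ¬ ∃ α β : ℤ, 0 ≤ α ∧ 0 ≤ β ∧
      (540*n^2 + 654*n + 197) - (396*n + 237) - (180*n^2 + 218*n + 66) =
        α * (30*n + 18) + β * (36*n + 22) := by
  rintro ⟨α, β, hα, hβ, h⟩
  have hcop : IsCoprime (15*n + 9) (18*n + 11) := ⟨-6, 5, by ring⟩
  have hkey : (18*n + 11) * (β - (10*n + 5)) = (15*n + 9) * (-12 - α) := by linarith [h, sq_nonneg n]
  have hdvd : (15*n + 9) ∣ (18*n + 11) * (β - (10*n + 5)) := ⟨-12 - α, hkey.symm ▸ rfl⟩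
  have hdvd' : (15*n + 9) ∣ (β - (10*n + 5)) := hcop.dvd_of_dvd_mul_left hdvd
  obtain ⟨k, hk⟩ := hdvd'
  have hne : (15*n + 9) ≠ 0 := by intro h0; omega
  have hα' : α = -12 - (18*n + 11) * k := by
    have : (15*n + 9) * ((18*n + 11) * k) = (15*n + 9) * (-12 - α) := by
      rw [← hkey, hk]; ring
    have := mul_left_cancel₀ hne this
    linarith
  have hk1 : k ≤ -1 := by nlinarith
  nlinarith [hβ, hk, hk1]
end

section
/- For every integer n ≥ 1, there is no pair of non-negative integers (α, β) such that (540n^2 + 654n + 197) - (396n + 237) - 2*(180n^2 + 218n + 66) = α*(30n + 18) + β*(36n + 22). -/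
theorem stmt_11 (n : ℤ) (hn : 1 ≤ n) :
    ¬ ∃ α β : ℤ, 0 ≤ α ∧ 0 ≤ β ∧
      (540*n^2 + 654*n + 197) - (396*n + 237) - 2*(180*n^2 + 218*n + 66) =
        α * (30*n + 18) + β * (36*n + 22) := by
  rintro ⟨α, β, hα, hβ, h⟩
  set d : ℤ := 5*α + 6*β - (30*n - 48) with hd
  have h1 : (36*n+22) * d = 24 + 2*α := by linear_combination -6*h
  have h2 : (30*n+18) * d = 10*n + 4 - 2*β := by linear_combination -5*h
  have hd1 : 1 ≤ d := by nlinarith [h1, hα, hn]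
  have := mul_le_mul_of_nonneg_left hd1 (show (0:ℤ) ≤ 30*n+18 by linarith)
  nlinarith [h2, hβ, hn]
end

section
/- For every integer n ≥ 1 and each i ∈ {1,2,3}, the integer (540n^2 + 654n + 197) - |y_i| - (180n^2 + 218n + 66) is not divisible by 36n + 22, where |y_1| = 126n + 75, |y_2| = 132n + 79, |y_3| = 138n + 83. -/
lemma aux_no_div (a b m : ℤ) (hb : 0 < b) (hba : b < a) (h : a * m = b) : False := by
  rcases le_or_gt m 0 with h' | h'
  · nlinarith
  · nlinarith

theorem stmt_13 (n : ℤ) (hn : 1 ≤ n)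
    (y : Fin 3 → ℤ) (hy : y 0 = 126*n + 75 ∧ y 1 = 132*n + 79 ∧ y 2 = 138*n + 83) :
    ∀ i : Fin 3, ¬ (36*n + 22 ∣ (540*n^2 + 654*n + 197) - y i - (180*n^2 + 218*n + 66)) := by
  obtain ⟨h0, h1, h2⟩ := hy
  have h0' : y ⟨0, by norm_num⟩ = 126*n + 75 := h0
  have h1' : y ⟨1, by norm_num⟩ = 132*n + 79 := h1
  have h2' : y ⟨2, by norm_num⟩ = 138*n + 83 := h2
  intro i
  fin_cases i <;> rintro ⟨k, hk⟩ <;> rw [h0', h1', h2'] at *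
  · exact aux_no_div (36*n+22) (18*n+10) (10*n+3-k) (by linarith) (by linarith)
      (by linear_combination hk)
  · exact aux_no_div (36*n+22) (24*n+14) (10*n+3-k) (by linarith) (by linarith)
      (by linear_combination hk)
  · exact aux_no_div (36*n+22) (30*n+18) (10*n+3-k) (by linarith) (by linarith)
      (by linear_combination hk)
end
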